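/- For every x in the closed upper half-space the following identity holds: ((2−n)/2)·U(x) − ∇U(x)·(x + D·eₙ) + D·∂U/∂xₙ(x) = αₙ·|K|^{−(n−2)/4}·((n−2)/2)·(|x|² + 1 − D²)·(|x̃|² + (xₙ + D)² − 1)^{−n/2}, where eₙ is the n-th standard basis vector of ℝⁿ. -/

import Mathlib

open Real MeasureTheory

noncomputable section

/-- `αₙ = (4n(n−1))^((n−2)/4)`. -/
def alphaN (n : ℕ) : ℝ := (4 * (n : ℝ) * ((n : ℝ) - 1)) ^ (((n : ℝ) - 2) / 4)

/-- `cₙ = 4(n−1)/(n−2)`. -/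
def cN (n : ℕ) : ℝ := 4 * ((n : ℝ) - 1) / ((n : ℝ) - 2)

/-- Points of `ℝⁿ = ℝ^{n-1} × ℝ`, written as pairs `(y, xₙ)`. -/
abbrev HalfPt (n : ℕ) := (Fin (n - 1) → ℝ) × ℝ

/-- `|y|² + (xₙ + D)² − 1`. -/
def QD (n : ℕ) (D : ℝ) (x : HalfPt n) : ℝ := (∑ i, (x.1 i) ^ 2) + (x.2 + D) ^ 2 - 1

/-- The standard bubble `U(x) = αₙ |K|^{-(n-2)/4} (|y|² + (xₙ+D)² − 1)^{-(n-2)/2}`. -/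
def bubbleU (n : ℕ) (K D : ℝ) (x : HalfPt n) : ℝ :=
  alphaN n * |K| ^ (-(((n : ℝ) - 2) / 4)) * QD n D x ^ (-(((n : ℝ) - 2) / 2))

/-- Second directional derivative of `f` in the direction `v` at `x`. -/
def dd2 (n : ℕ) (f : HalfPt n → ℝ) (v : HalfPt n) (x : HalfPt n) : ℝ :=
  fderiv ℝ (fun y => fderiv ℝ f y v) x v

/-- Euclidean Laplacian: sum of the second partial derivatives along the coordinate
directions of `ℝ^{n-1} × ℝ`. -/
def lap (n : ℕ) (f : HalfPt n → ℝ) (x : HalfPt n) : ℝ :=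
  (∑ i : Fin (n - 1), dd2 n f (Pi.single i 1, 0) x) + dd2 n f ((0 : Fin (n - 1) → ℝ), 1) x

/-- The bubble family `U_{δ,x₀(δ)}` with `x₀(δ) = (t, −Dδ)`. -/
def bubbleFam (n : ℕ) (K D δ : ℝ) (t : Fin (n - 1) → ℝ) (x : HalfPt n) : ℝ :=
  alphaN n * |K| ^ (-(((n : ℝ) - 2) / 4)) * δ ^ (((n : ℝ) - 2) / 2) *
    ((∑ i, (x.1 i - t i) ^ 2) + (x.2 + D * δ) ^ 2 - δ ^ 2) ^ (-(((n : ℝ) - 2) / 2))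

/-- `𝔧ᵢ`, `i = 1, …, n−1`: the tangential derivatives of the bubble. -/
def jTan (n : ℕ) (K D : ℝ) (i : Fin (n - 1)) (x : HalfPt n) : ℝ :=
  alphaN n * |K| ^ (-(((n : ℝ) - 2) / 4)) * (2 - (n : ℝ)) * x.1 i * QD n D x ^ (-((n : ℝ) / 2))

/-- `𝔧ₙ`. -/
def jNor (n : ℕ) (K D : ℝ) (x : HalfPt n) : ℝ :=
  alphaN n * |K| ^ (-(((n : ℝ) - 2) / 4)) * (((n : ℝ) - 2) / 2) *
    ((∑ i, (x.1 i) ^ 2) + x.2 ^ 2 + 1 - D ^ 2) * QD n D x ^ (-((n : ℝ) / 2))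

/-- All the `𝔧ᵢ`, `i = 1, …, n`, indexed by `Fin n`. -/
def jAll (n : ℕ) (K D : ℝ) (i : Fin n) (x : HalfPt n) : ℝ :=
  if h : (i : ℕ) < n - 1 then jTan n K D ⟨(i : ℕ), h⟩ x else jNor n K D x

/-- `I^n_{n-1} = ∫₀^∞ ρⁿ (1+ρ²)^{-(n-1)} dρ`. -/
def Iconst (n : ℕ) : ℝ := ∫ ρ in Set.Ioi (0 : ℝ), ρ ^ n / (1 + ρ ^ 2) ^ (n - 1)

/-- `ω_{n-1}`: the `(n−2)`-dimensional Hausdorff measure of the unit sphere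
`S^{n-2} ⊆ ℝ^{n-1}`. -/
def omegaN (n : ℕ) : ℝ :=
  (μH[(n : ℝ) - 2] (Metric.sphere (0 : EuclideanSpace ℝ (Fin (n - 1))) 1)).toReal

/-- `φ_m(D) = ∫_D^∞ (t²−1)^{−m} dt`. -/
def phiFun (m D : ℝ) : ℝ := ∫ t in Set.Ioi D, (t ^ 2 - 1) ^ (-m)

/-- `|∇f(x)|²`, the squared Euclidean norm of the gradient. -/
def gradSq (n : ℕ) (f : HalfPt n → ℝ) (x : HalfPt n) : ℝ :=
  (∑ i : Fin (n - 1), (fderiv ℝ f x (Pi.single i 1, (0 : ℝ))) ^ 2) +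
    (fderiv ℝ f x ((0 : Fin (n - 1) → ℝ), 1)) ^ 2

/-- The energy of the bubble. -/
def energyE (n : ℕ) (K H D : ℝ) : ℝ :=
  cN n / 2 * (∫ x in {x : HalfPt n | 0 < x.2}, gradSq n (bubbleU n K D) x) +
    ((n : ℝ) - 2) / (2 * (n : ℝ)) * |K| *
      (∫ x in {x : HalfPt n | 0 < x.2}, bubbleU n K D x ^ (2 * (n : ℝ) / ((n : ℝ) - 2))) -
    ((n : ℝ) - 2) * H *
      (∫ y : Fin (n - 1) → ℝ, bubbleU n K D (y, 0) ^ (2 * ((n : ℝ) - 1) / ((n : ℝ) - 2)))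

/-- The Euclidean norm `|x|` on `ℝ^{n-1} × ℝ`. -/
def enormE (n : ℕ) (x : HalfPt n) : ℝ := Real.sqrt ((∑ i, (x.1 i) ^ 2) + x.2 ^ 2)

/-- The source term `E_h`. -/
def Ehsrc (n : ℕ) (K D : ℝ) (h : Fin (n - 1) → Fin (n - 1) → ℝ) (x : HalfPt n) : ℝ :=
  (8 * ((n : ℝ) - 1) / ((n : ℝ) - 2)) *
    (∑ i : Fin (n - 1), ∑ j : Fin (n - 1),
      h i j *
        fderiv ℝ (fun y => fderiv ℝ (bubbleU n K D) y (Pi.single j 1, (0 : ℝ))) x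
          (Pi.single i 1, (0 : ℝ))) * x.2

section

variable {n : ℕ} {D : ℝ}

theorem hasFDerivAt_QD (x : HalfPt n) :
    HasFDerivAt (QD n D)
      ((∑ i : Fin (n - 1), (2 * x.1 i) •
          (ContinuousLinearMap.proj i).comp (ContinuousLinearMap.fst ℝ (Fin (n - 1) → ℝ) ℝ)) +
        (2 * (x.2 + D)) • ContinuousLinearMap.snd ℝ (Fin (n - 1) → ℝ) ℝ) x := by
  have hcoord (i : Fin (n - 1)) : HasFDerivAt (fun y : HalfPt n => y.1 i ^ 2)
      ((2 * x.1 i) • (ContinuousLinearMap.proj i).comp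
        (ContinuousLinearMap.fst ℝ (Fin (n - 1) → ℝ) ℝ)) x := by
    simpa using (((ContinuousLinearMap.proj (R := ℝ) (φ := fun _ : Fin (n - 1) => ℝ) i).comp
      (ContinuousLinearMap.fst ℝ (Fin (n - 1) → ℝ) ℝ)).hasFDerivAt (x := x)).pow 2
  have hlast : HasFDerivAt (fun y : HalfPt n => (y.2 + D) ^ 2)
      ((2 * (x.2 + D)) • ContinuousLinearMap.snd ℝ (Fin (n - 1) → ℝ) ℝ) x := by
    simpa [mul_add] using
      (((ContinuousLinearMap.snd ℝ (Fin (n - 1) → ℝ) ℝ).hasFDerivAt (x := x)).add_const D).pow 2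
  exact ((HasFDerivAt.fun_sum fun i _ => hcoord i).add hlast).sub_const 1

theorem fderiv_QD_apply (x v : HalfPt n) :
    fderiv ℝ (QD n D) x v = 2 * (∑ i, x.1 i * v.1 i) + 2 * (x.2 + D) * v.2 := by
  simp [(hasFDerivAt_QD x).fderiv, Finset.mul_sum, mul_assoc]

theorem QD_pos {x : HalfPt n} (h : 1 < x.2 + D) : 0 < QD n D x := by
  have hsum : 0 ≤ ∑ i, x.1 i ^ 2 := Finset.sum_nonneg fun i _ => sq_nonneg _
  unfold QD
  nlinarith

variable {K : ℝ}

theorem fderiv_bubbleU_apply {x : HalfPt n} (hx : QD n D x ≠ 0) (v : HalfPt n) :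
    fderiv ℝ (bubbleU n K D) x v =
      alphaN n * |K| ^ (-(((n : ℝ) - 2) / 4)) *
        (-(((n : ℝ) - 2) / 2) * QD n D x ^ (-(((n : ℝ) - 2) / 2) - 1) *
          fderiv ℝ (QD n D) x v) := by
  have hU := ((hasFDerivAt_QD x).rpow_const (p := -(((n : ℝ) - 2) / 2)) (Or.inl hx)).const_mul
    (alphaN n * |K| ^ (-(((n : ℝ) - 2) / 4)))
  rw [HasFDerivAt.fderiv (f := bubbleU n K D) hU, (hasFDerivAt_QD x).fderiv]
  rfl

/-- Since `bubbleFam n K D δ 0 x = δ ^ (-(n - 2) / 2) * bubbleU n K D (δ⁻¹ • x)`, the left side is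
the `δ`-derivative of the bubble family at `δ = 1`; this is how `jNor` arises. -/
theorem bubbleU_dilation_identity {x : HalfPt n} (hx : QD n D x ≠ 0) :
    (2 - (n : ℝ)) / 2 * bubbleU n K D x - fderiv ℝ (bubbleU n K D) x x = jNor n K D x := by
  have hpow : QD n D x ^ (-(((n : ℝ) - 2) / 2)) =
      QD n D x ^ (-(((n : ℝ) - 2) / 2) - 1) * QD n D x := by
    rw [← Real.rpow_add_one hx]; ring_nf
  have hexp : -((n : ℝ) / 2) = -(((n : ℝ) - 2) / 2) - 1 := by ring
  rw [fderiv_bubbleU_apply hx, fderiv_QD_apply, bubbleU, jNor, hpow, hexp]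
  simp only [← pow_two]
  unfold QD
  ring

end

theorem jn_identity_general
    (n : ℕ) (K D : ℝ) (hD1 : 1 < D) :
    ∀ x : HalfPt n, 0 ≤ x.2 →
      ((2 - (n : ℝ)) / 2) * bubbleU n K D x
          - fderiv ℝ (bubbleU n K D) x (x.1, x.2 + D)
          + D * fderiv ℝ (bubbleU n K D) x ((0 : Fin (n - 1) → ℝ), 1)
        = jNor n K D x := by
  intro x hx
  have hQ : QD n D x ≠ 0 := (QD_pos (by linarith)).ne'
  have hsplit : (x.1, x.2 + D) = x + D • ((0 : Fin (n - 1) → ℝ), (1 : ℝ)) := by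
    ext <;> simp
  rw [hsplit, map_add, map_smul, smul_eq_mul, ← bubbleU_dilation_identity hQ]
  ring

theorem jn_identity
    (n : ℕ) (hn : 4 ≤ n) (K H D : ℝ) (hK : K < 0) (hH : 0 < H)
    (hD : D = Real.sqrt ((n : ℝ) * ((n : ℝ) - 1)) * H / Real.sqrt |K|) (hD1 : 1 < D) :
    ∀ x : HalfPt n, 0 ≤ x.2 →
      ((2 - (n : ℝ)) / 2) * bubbleU n K D x
          - fderiv ℝ (bubbleU n K D) x (x.1, x.2 + D)
          + D * fderiv ℝ (bubbleU n K D) x ((0 : Fin (n - 1) → ℝ), 1)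
        = jNor n K D x :=
  jn_identity_general n K D hD1
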